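/- arXiv:2509.19649 — 4 statements merged into one kernel-verified Lean document; each statement's English description precedes it below -/
import Mathlib

section
/- If a partition λ of length at most n weakly majorizes a partition μ (i.e., the partial sums of λ dominate those of μ), then there exists a partition ν with λ ⊇ ν (entrywise) and ν majorizes μ (same partial sums dominance with |ν| = |μ|). -/
private lemma wmaux (n : ℕ) (m : ℕ → ℕ) (hm0 : ∀ i, n ≤ i → m i = 0) :
    ∀ d (l : ℕ → ℕ), (∀ i j, i ≤ j → l j ≤ l i) → (∀ i, n ≤ i → l i = 0) →
    (∀ k, ∑ i ∈ Finset.range k, m i ≤ ∑ i ∈ Finset.range k, l i) →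
    (∑ i ∈ Finset.range n, l i = ∑ i ∈ Finset.range n, m i + d) →
    ∃ v : ℕ → ℕ,
      (∀ i j, i ≤ j → v j ≤ v i) ∧ (∀ i, n ≤ i → v i = 0) ∧
      (∀ i, v i ≤ l i) ∧
      (∀ k, ∑ i ∈ Finset.range k, m i ≤ ∑ i ∈ Finset.range k, v i) ∧
      (∑ i ∈ Finset.range n, v i = ∑ i ∈ Finset.range n, m i) := by
  intro d
  induction d with
  | zero =>
    intro l hl hl0 hwm hsum
    exact ⟨l, hl, hl0, fun i => le_rfl, hwm, by simpa using hsum⟩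
  | succ d ih =>
    intro l hl hl0 hwm hsum
    -- there is a positive entry
    have hpos : 0 < ∑ i ∈ Finset.range n, l i := by omega
    have hex : ∃ j ∈ Finset.range n, l j ≠ 0 := by
      by_contra h
      push_neg at h
      have : ∑ i ∈ Finset.range n, l i = 0 := Finset.sum_eq_zero h
      omega
    -- largest such index
    set S := (Finset.range n).filter (fun j => l j ≠ 0) with hS
    have hSne : S.Nonempty := by
      obtain ⟨j, hj1, hj2⟩ := hex
      exact ⟨j, by simp [hS, hj1, hj2]⟩
    set j := S.max' hSne with hj
    have hjS : j ∈ S := S.max'_mem hSne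
    have hjn : j < n := (Finset.mem_filter.mp hjS).1 |> Finset.mem_range.mp
    have hjpos : l j ≠ 0 := (Finset.mem_filter.mp hjS).2
    have hzero : ∀ i, j < i → l i = 0 := by
      intro i hi
      by_contra h
      rcases lt_or_ge i n with h1 | h1
      · have : i ∈ S := by simp [hS, Finset.mem_range.mpr h1, h]
        exact absurd (S.le_max' i this) (by omega)
      · exact h (hl0 i h1)
    set l' : ℕ → ℕ := fun i => if i = j then l j - 1 else l i with hl'
    have hle : ∀ i, l' i ≤ l i := by
      intro i; simp only [hl']; split
      · next h => subst h; omega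
      · exact le_rfl
    have hl'mono : ∀ i k, i ≤ k → l' k ≤ l' i := by
      intro i k hik
      simp only [hl']
      split
      · next hk =>
        subst hk
        split
        · exact le_rfl
        · next hi => exact le_trans (Nat.sub_le _ _) (hl i j hik)
      · next hk =>
        split
        · next hi =>
          subst hi
          have : j < k := lt_of_le_of_ne hik (Ne.symm hk)
          rw [hzero k this]; omega
        · exact hl i k hik
    have hl'0 : ∀ i, n ≤ i → l' i = 0 := by
      intro i hi
      have : i ≠ j := by omega
      simp [hl', this, hl0 i hi]
    -- sum identities
    have hsplit : ∀ k, j < k → ∑ i ∈ Finset.range k, l i = (∑ i ∈ Finset.range k, l' i) + 1 := by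
      intro k hk
      have : ∀ i ∈ Finset.range k, l i = l' i + (if i = j then 1 else 0) := by
        intro i _
        simp only [hl']
        split
        · next h => subst h; omega
        · simp
      rw [Finset.sum_congr rfl this, Finset.sum_add_distrib,
        Finset.sum_ite_eq' (Finset.range k) j (fun _ => 1)]
      simp [Finset.mem_range.mpr hk]
    have hsame : ∀ k, j ≥ k → ∑ i ∈ Finset.range k, l i = ∑ i ∈ Finset.range k, l' i := by
      intro k hk
      apply Finset.sum_congr rfl
      intro i hi
      have : i ≠ j := by have := Finset.mem_range.mp hi; omega
      simp [hl', this]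
    -- tail sums are total sums
    have htail : ∀ k, j < k → ∑ i ∈ Finset.range k, l i = ∑ i ∈ Finset.range n, l i := by
      intro k hk
      have h1 : ∑ i ∈ Finset.range (j+1), l i = ∑ i ∈ Finset.range k, l i := by
        apply Finset.sum_subset (Finset.range_subset_range.mpr (by omega))
        intro i _ hi
        exact hzero i (by simpa using hi)
      have h2 : ∑ i ∈ Finset.range (j+1), l i = ∑ i ∈ Finset.range n, l i := by
        apply Finset.sum_subset (Finset.range_subset_range.mpr (by omega))
        intro i _ hi
        exact hzero i (by simpa using hi)
      omega
    have hmtail : ∀ k, ∑ i ∈ Finset.range k, m i ≤ ∑ i ∈ Finset.range n, m i := by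
      intro k
      rcases le_or_gt k n with h1 | h1
      · exact Finset.sum_le_sum_of_subset (Finset.range_subset_range.mpr h1)
      · have : ∑ i ∈ Finset.range n, m i = ∑ i ∈ Finset.range k, m i := by
          apply Finset.sum_subset (Finset.range_subset_range.mpr (by omega))
          intro i _ hi
          exact hm0 i (by simpa using hi)
        omega
    have hwm' : ∀ k, ∑ i ∈ Finset.range k, m i ≤ ∑ i ∈ Finset.range k, l' i := by
      intro k
      rcases le_or_gt k j with h1 | h1
      · rw [← hsame k h1]; exact hwm k
      · have e1 := hsplit k h1
        have e2 := htail k h1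
        have e3 := hmtail k
        omega
    have hsum' : ∑ i ∈ Finset.range n, l' i = ∑ i ∈ Finset.range n, m i + d := by
      have := hsplit n hjn
      omega
    obtain ⟨v, h1, h2, h3, h4, h5⟩ := ih l' hl'mono hl'0 hwm' hsum'
    exact ⟨v, h1, h2, fun i => le_trans (h3 i) (hle i), h4, h5⟩

/-- If a partition `l` of length at most `n` weakly majorizes a partition `m`,
then there exists a partition `v` with `l ⊇ v` entrywise and `v` majorizes `m`. -/
theorem weakly_majorizes_iff_contains_majorizes
    (n : ℕ) (l m : ℕ → ℕ)
    (hl : ∀ i j, i ≤ j → l j ≤ l i) (hl0 : ∀ i, n ≤ i → l i = 0)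
    (hm : ∀ i j, i ≤ j → m j ≤ m i) (hm0 : ∀ i, n ≤ i → m i = 0)
    (hwm : ∀ k, ∑ i ∈ Finset.range k, m i ≤ ∑ i ∈ Finset.range k, l i) :
    ∃ v : ℕ → ℕ,
      (∀ i j, i ≤ j → v j ≤ v i) ∧ (∀ i, n ≤ i → v i = 0) ∧
      (∀ i, v i ≤ l i) ∧
      (∀ k, ∑ i ∈ Finset.range k, m i ≤ ∑ i ∈ Finset.range k, v i) ∧
      (∑ i ∈ Finset.range n, v i = ∑ i ∈ Finset.range n, m i) := by
  have h := hwm n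
  exact wmaux n m hm0 (∑ i ∈ Finset.range n, l i - ∑ i ∈ Finset.range n, m i) l
    hl hl0 hwm (by omega)
end

section
/- Let λ, μ be partitions of length at most n with |λ| = |μ|. If the normalized monomial symmetric polynomial difference M_λ(x) − M_μ(x) is nonnegative for all x ∈ (1,∞)^n, then λ weakly majorizes μ. -/
open Finset

/-- The normalized monomial symmetric function `M_λ(x) = m_λ(x)/m_λ(1,…,1)`,
written as the average over the symmetric group of the monomials `x^{σ·λ}`. -/
noncomputable def normMonomial {n : ℕ} (l : Fin n → ℕ) (x : Fin n → ℝ) : ℝ :=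
  (∑ σ : Equiv.Perm (Fin n), ∏ i, x i ^ l (σ i)) / (Nat.factorial n)

/-- For antitone `l`, permuting the entries cannot increase a prefix sum. -/
lemma perm_prefix_sum_le {n : ℕ} (l : Fin n → ℕ)
    (hl : ∀ i j : Fin n, i ≤ j → l j ≤ l i) (k : ℕ) (σ : Equiv.Perm (Fin n)) :
    ∑ i ∈ Finset.univ.filter (fun i : Fin n => (i : ℕ) < k), l (σ i) ≤
      ∑ i ∈ Finset.univ.filter (fun i : Fin n => (i : ℕ) < k), l i := by
  have key : Monovary (fun i : Fin n => if (i : ℕ) < k then (1 : ℝ) else 0)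
      (fun i : Fin n => (l i : ℝ)) := by
    intro i j hij
    have hij' : l i < l j := by simpa using hij
    have hji : j < i := by
      by_contra hc
      push_neg at hc
      exact absurd (hl i j hc) (Nat.not_le.mpr hij')
    by_cases h1 : (i : ℕ) < k
    · simp [h1, (lt_of_le_of_lt (Nat.le_of_lt (Fin.lt_iff_val_lt_val.mp hji)) h1 : (j:ℕ) < k)]
    · by_cases h2 : (j : ℕ) < k <;> simp [h1, h2]
  have := key.sum_smul_comp_perm_le_sum_smul (σ := σ)
  simp only [smul_eq_mul, ite_mul, one_mul, zero_mul] at this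
  rw [Finset.sum_ite, Finset.sum_ite, Finset.sum_const_zero, add_zero, add_zero] at this
  rw [← Nat.cast_le (α := ℝ), Nat.cast_sum, Nat.cast_sum]
  exact this

/-- If the normalized monomial difference `M_λ - M_μ` is nonnegative on `(1,∞)^n`,
then `λ` weakly majorizes `μ`. -/
theorem weak_majorization_of_normMonomial_nonneg
    (n : ℕ) (l m : Fin n → ℕ)
    (hl : ∀ i j : Fin n, i ≤ j → l j ≤ l i)
    (hm : ∀ i j : Fin n, i ≤ j → m j ≤ m i)
    (hsum : ∑ i, l i = ∑ i, m i)
    (hpos : ∀ x : Fin n → ℝ, (∀ i, 1 < x i) →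
      normMonomial m x ≤ normMonomial l x) :
    ∀ k : ℕ, ∑ i ∈ Finset.univ.filter (fun i : Fin n => (i : ℕ) < k), m i ≤
      ∑ i ∈ Finset.univ.filter (fun i : Fin n => (i : ℕ) < k), l i := by
  intro k
  by_contra hcon
  push_neg at hcon
  set S : Finset (Fin n) := Finset.univ.filter (fun i : Fin n => (i : ℕ) < k) with hS
  set Sl : ℕ := ∑ i ∈ S, l i with hSl
  set Sm : ℕ := ∑ i ∈ S, m i with hSm
  set T : ℕ := ∑ i, l i with hT
  set t : ℝ := (Nat.factorial n : ℝ) * 2 ^ T + 2 with ht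
  have hfacpos : (0 : ℝ) < (Nat.factorial n : ℝ) := by
    exact_mod_cast Nat.factorial_pos n
  have ht2 : (2 : ℝ) ≤ t := by
    have : (0:ℝ) ≤ (Nat.factorial n : ℝ) * 2 ^ T := by positivity
    linarith
  have ht1 : (1 : ℝ) ≤ t := by linarith
  set x : Fin n → ℝ := fun i => if (i : ℕ) < k then t else 2 with hx
  have hx1 : ∀ i, 1 < x i := by
    intro i
    by_cases h : (i : ℕ) < k <;> simp [hx, h] <;> linarith
  have hx0 : ∀ i, 0 < x i := fun i => lt_trans one_pos (hx1 i)
  have hkey := hpos x hx1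
  -- lower bound for normMonomial m x
  have hlow : t ^ Sm / (Nat.factorial n : ℝ) ≤ normMonomial m x := by
    unfold normMonomial
    gcongr
    have hid : t ^ Sm ≤ ∏ i, x i ^ m ((1 : Equiv.Perm (Fin n)) i) := by
      simp only [Equiv.Perm.one_apply]
      rw [← Finset.prod_filter_mul_prod_filter_not Finset.univ (fun i : Fin n => (i : ℕ) < k)]
      have h1 : ∏ i ∈ S, x i ^ m i = t ^ Sm := by
        rw [hSm, ← Finset.prod_pow_eq_pow_sum]
        apply Finset.prod_congr rfl
        intro i hi
        rw [hS, Finset.mem_filter] at hi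
        simp [hx, hi.2]
      calc t ^ Sm = t ^ Sm * 1 := by ring
        _ ≤ (∏ i ∈ S, x i ^ m i) * ∏ i ∈ Finset.univ.filter (fun i : Fin n => ¬(i : ℕ) < k), x i ^ m i := by
            rw [h1]
            apply mul_le_mul_of_nonneg_left _ (by positivity)
            have := Finset.prod_le_prod (s := Finset.univ.filter (fun i : Fin n => ¬(i : ℕ) < k))
              (f := fun _ => (1:ℝ)) (g := fun i => x i ^ m i)
              (by intro i _; norm_num) (by intro i _; exact one_le_pow₀ (hx1 i).le)
            simpa using this
        _ = _ := rfl
    calc t ^ Sm ≤ ∏ i, x i ^ m ((1 : Equiv.Perm (Fin n)) i) := hid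
      _ ≤ ∑ σ : Equiv.Perm (Fin n), ∏ i, x i ^ m (σ i) := by
          apply Finset.single_le_sum (f := fun σ : Equiv.Perm (Fin n) => ∏ i, x i ^ m (σ i))
            _ (Finset.mem_univ 1)
          intro σ _
          positivity
  -- upper bound for normMonomial l x
  have hterm : ∀ σ : Equiv.Perm (Fin n), ∏ i, x i ^ l (σ i) ≤ t ^ Sl * 2 ^ T := by
    intro σ
    rw [← Finset.prod_filter_mul_prod_filter_not Finset.univ (fun i : Fin n => (i : ℕ) < k)]
    have h1 : ∏ i ∈ S, x i ^ l (σ i) = t ^ (∑ i ∈ S, l (σ i)) := by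
      rw [← Finset.prod_pow_eq_pow_sum]
      apply Finset.prod_congr rfl
      intro i hi
      rw [hS, Finset.mem_filter] at hi
      simp [hx, hi.2]
    have h2 : ∏ i ∈ Finset.univ.filter (fun i : Fin n => ¬(i : ℕ) < k), x i ^ l (σ i)
        = (2:ℝ) ^ (∑ i ∈ Finset.univ.filter (fun i : Fin n => ¬(i : ℕ) < k), l (σ i)) := by
      rw [← Finset.prod_pow_eq_pow_sum]
      apply Finset.prod_congr rfl
      intro i hi
      rw [Finset.mem_filter] at hi
      simp [hx, hi.2]
    rw [h1, h2]
    have he : ∑ i ∈ S, l (σ i) ≤ Sl := perm_prefix_sum_le l hl k σ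
    have hf : ∑ i ∈ Finset.univ.filter (fun i : Fin n => ¬(i : ℕ) < k), l (σ i) ≤ T := by
      rw [hT]
      calc _ ≤ ∑ i, l (σ i) := Finset.sum_le_sum_of_subset (Finset.filter_subset _ _)
        _ = ∑ i, l i := Equiv.sum_comp σ l
    apply mul_le_mul
    · exact pow_le_pow_right₀ ht1 he
    · exact pow_le_pow_right₀ one_le_two hf
    · positivity
    · positivity
  have hup : normMonomial l x ≤ t ^ Sl * 2 ^ T := by
    unfold normMonomial
    rw [div_le_iff₀ hfacpos]
    calc ∑ σ : Equiv.Perm (Fin n), ∏ i, x i ^ l (σ i)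
        ≤ ∑ _σ : Equiv.Perm (Fin n), t ^ Sl * 2 ^ T := Finset.sum_le_sum (fun σ _ => hterm σ)
      _ = (Nat.factorial n : ℝ) * (t ^ Sl * 2 ^ T) := by
          rw [Finset.sum_const, Finset.card_univ, Fintype.card_perm, Fintype.card_fin, nsmul_eq_mul]
      _ = t ^ Sl * 2 ^ T * (Nat.factorial n : ℝ) := by ring
  -- combine
  have hmain : t ^ Sm ≤ (Nat.factorial n : ℝ) * 2 ^ T * t ^ Sl := by
    have := le_trans hlow (le_trans hkey hup)
    rw [div_le_iff₀ hfacpos] at this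
    calc t ^ Sm ≤ t ^ Sl * 2 ^ T * (Nat.factorial n : ℝ) := this
      _ = (Nat.factorial n : ℝ) * 2 ^ T * t ^ Sl := by ring
  have hpow : t ^ (Sl + 1) ≤ t ^ Sm := pow_le_pow_right₀ ht1 (by omega)
  have htSl : (0:ℝ) < t ^ Sl := by positivity
  have : t ≤ (Nat.factorial n : ℝ) * 2 ^ T := by
    have h := le_trans hpow hmain
    rw [pow_succ, mul_comm (t ^ Sl) t] at h
    exact le_of_mul_le_mul_right h htSl
  linarith
end

section
/- For integers a ≥ 0, b ≥ 1 and variables x₁, x₂: 2·(M_{(a+b+1,a)}(x₁,x₂) − M_{(a+b,a+1)}(x₁,x₂)) = (x₁ − x₂)² · s_{(a+b−1,a)}(x₁,x₂), where s_{(p,q)}(x₁,x₂) = (x₁^{p+1} x₂^q − x₁^q x₂^{p+1})/(x₁ − x₂) = Σ_{i=q}^{p} x₁^i x₂^{p+q−i} is the two-variable Schur polynomial. -/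
/-- The normalized two-variable monomial symmetric polynomial `M_{(p,q)}`
(for a partition `p ≥ q`): normalizer `2` when `p ≠ q` and `1` when `p = q`. -/
noncomputable def M2 (p q : ℕ) (x y : ℝ) : ℝ :=
  if p = q then x ^ p * y ^ p else (x ^ p * y ^ q + x ^ q * y ^ p) / 2

lemma schur_factor (a b : ℕ) (hb : 1 ≤ b) (x y : ℝ) :
    ∑ i ∈ Finset.Icc a (a + b - 1), x ^ i * y ^ (a + (a + b - 1) - i)
      = x ^ a * y ^ a * ∑ j ∈ Finset.range b, x ^ j * y ^ (b - 1 - j) := by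
  rw [show Finset.Icc a (a + b - 1) = Finset.Ico a (a + b) by
        rw [← Finset.Ico_add_one_right_eq_Icc]; congr 1; omega,
    Finset.sum_Ico_eq_sum_range, show a + b - a = b by omega, Finset.mul_sum]
  refine Finset.sum_congr rfl fun j hj => ?_
  have hj' : j < b := Finset.mem_range.mp hj
  have h1 : a + (a + b - 1) - (a + j) = a + (b - 1 - j) := by omega
  rw [h1, pow_add, pow_add]; ring

/-- `2·(M_{(a+b+1,a)} - M_{(a+b,a+1)}) = (x₁-x₂)² · s_{(a+b-1,a)}(x₁,x₂)`, where the
two-variable Schur polynomial is `s_{(p,q)}(x₁,x₂) = Σ_{i=q}^{p} x₁^i x₂^{p+q-i}`. -/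
theorem muirhead_difference_eq_schur
    (a b : ℕ) (hb : 1 ≤ b) (x₁ x₂ : ℝ) :
    2 * (M2 (a + b + 1) a x₁ x₂ - M2 (a + b) (a + 1) x₁ x₂) =
      (x₁ - x₂) ^ 2 *
        ∑ i ∈ Finset.Icc a (a + b - 1), x₁ ^ i * x₂ ^ (a + (a + b - 1) - i) := by
  rw [schur_factor a b hb]
  have hg := geom_sum₂_mul x₁ x₂ b
  rcases eq_or_lt_of_le hb with hb1 | hb2
  · subst hb1
    simp only [M2]
    rw [if_neg (by omega : ¬ a + 1 + 1 = a), if_pos trivial, Finset.range_one, Finset.sum_singleton]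
    norm_num
    ring
  · simp only [M2, if_neg (by omega : a + b + 1 ≠ a), if_neg (by omega : a + b ≠ a + 1)]
    linear_combination (-(x₁ - x₂)) * x₁ ^ a * x₂ ^ a * hg
end

section
/- With b_k = (1 − t q^{k−1})/(1 − q^k) for real q, t > 1, and integers d, l, s with 1 ≤ l ≤ ⌊(d−1)/2⌋ and l < s_i < d − l for i = 1,…,l, the quantity Σ_{i=1}^l (∏_{m=1}^{i−1} b_m)·(b_i b_{d−i} − b_{s_i} b_{d−s_i})·(∏_{m=d−l}^{d−i−1} b_m) + ∏_{m=d−l}^{d} b_m is strictly positive. -/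
open Finset

/-- `b_k = (1 - t q^{k-1})/(1 - q^k)`. -/
noncomputable def bq (q t : ℝ) (k : ℕ) : ℝ := (1 - t * q ^ (k - 1)) / (1 - q ^ k)

private lemma bq_eq (q t : ℝ) (k : ℕ) :
    bq q t k = (t * q ^ (k - 1) - 1) / (q ^ k - 1) := by
  rw [bq, show (1 - t * q ^ (k - 1)) = -(t * q ^ (k - 1) - 1) by ring,
      show (1 - q ^ k) = -(q ^ k - 1) by ring, neg_div_neg_eq]

private lemma one_le_qpow (q : ℝ) (hq : 1 < q) (k : ℕ) : (1:ℝ) ≤ q ^ k := by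
  induction k with
  | zero => simp
  | succ n ih => rw [pow_succ]; nlinarith

private lemma qpow_sub_one_pos (q : ℝ) (hq : 1 < q) (k : ℕ) (hk : 1 ≤ k) :
    (0:ℝ) < q ^ k - 1 := by
  obtain ⟨j, rfl⟩ : ∃ j, k = j + 1 := ⟨k - 1, by omega⟩
  rw [pow_succ]
  nlinarith [one_le_qpow q hq j]

private lemma bq_pos (q t : ℝ) (hq : 1 < q) (ht : 1 < t) (k : ℕ) (hk : 1 ≤ k) :
    0 < bq q t k := by
  rw [bq_eq]
  apply div_pos _ (qpow_sub_one_pos q hq k hk)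
  nlinarith [one_le_qpow q hq (k - 1)]

private lemma bq_pair (q t : ℝ) (hq : 1 < q) (ht : 1 < t) (hqt : q ≤ t) (n a c : ℕ) :
    bq q t (n+a+2) * bq q t (n+c+2) ≤ bq q t (n+1) * bq q t (n+a+c+3) := by
  have hq0 : (0:ℝ) < q := by linarith
  have hden := qpow_sub_one_pos q hq
  rw [bq_eq, bq_eq, bq_eq, bq_eq,
     show n+a+2-1 = n+a+1 by omega, show n+c+2-1 = n+c+1 by omega,
     show n+1-1 = n by omega, show n+a+c+3-1 = n+a+c+2 by omega]
  rw [div_mul_div_comm, div_mul_div_comm,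
      div_le_div_iff₀ (mul_pos (hden _ (by omega)) (hden _ (by omega)))
        (mul_pos (hden _ (by omega)) (hden _ (by omega)))]
  have key : (t*q^n-1)*(t*q^(n+a+c+2)-1)*((q^(n+a+2)-1)*(q^(n+c+2)-1))
       - (t*q^(n+a+1)-1)*(t*q^(n+c+1)-1)*((q^(n+1)-1)*(q^(n+a+c+3)-1))
       = q^n*(q^(a+1)-1)*(q^(c+1)-1)*(t-q)*(t*q^(2*n+a+c+3)-1) := by ring
  have f1 : (0:ℝ) < q^n := pow_pos hq0 n
  have f2 := hden (a+1) (by omega)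
  have f3 := hden (c+1) (by omega)
  have f4 : (0:ℝ) ≤ t - q := by linarith
  have f5 : (0:ℝ) < t*q^(2*n+a+c+3)-1 := by
    have h1 := one_le_qpow q hq (2*n+a+c+3)
    nlinarith
  nlinarith [mul_nonneg (mul_nonneg (mul_nonneg (mul_nonneg f1.le f2.le) f3.le) f4) f5.le, key]

private lemma bq_step (q t : ℝ) (hq : 1 < q) (ht : 1 < t) (htq : t ≤ q) (n : ℕ) :
    bq q t (n+1) ≤ bq q t (n+2) := by
  have hq0 : (0:ℝ) < q := by linarith
  have hden := qpow_sub_one_pos q hq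
  rw [bq_eq, bq_eq, show n+1-1 = n by omega, show n+2-1 = n+1 by omega,
      div_le_div_iff₀ (hden (n+1) (by omega)) (hden (n+2) (by omega))]
  have key : (t*q^(n+1)-1)*(q^(n+1)-1) - (t*q^n-1)*(q^(n+2)-1) = q^n*(q-1)*(q-t) := by ring
  nlinarith [mul_nonneg (mul_nonneg (pow_pos hq0 n).le (by linarith : (0:ℝ) ≤ q-1))
    (by linarith : (0:ℝ) ≤ q-t), key]

private lemma bq_mono (q t : ℝ) (hq : 1 < q) (ht : 1 < t) (htq : t ≤ q) :
    ∀ k j : ℕ, 1 ≤ j → j ≤ k → bq q t j ≤ bq q t k := by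
  intro k
  induction k with
  | zero => intro j h1 h2; omega
  | succ m ih =>
    intro j h1 h2
    rcases Nat.eq_or_lt_of_le h2 with h | h
    · rw [h]
    · have h3 : j ≤ m := by omega
      have h4 := ih j h1 h3
      have h5 : bq q t m ≤ bq q t (m+1) := by
        have h6 := bq_step q t hq ht htq (m-1)
        rw [show m-1+1 = m by omega, show m-1+2 = m+1 by omega] at h6
        exact h6
      linarith

private lemma prod_split (f : ℕ → ℝ) (a i : ℕ) (h1 : 1 ≤ i) (h2 : a ≤ i) :
    ∏ m ∈ Icc a i, f m = (∏ m ∈ Icc a (i-1), f m) * f i := by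
  obtain ⟨j, rfl⟩ : ∃ j, i = j + 1 := ⟨i - 1, by omega⟩
  rw [Finset.prod_Icc_succ_top (by omega)]
  simp

private lemma sum_tele (g : ℕ → ℝ) (L : ℕ) :
    (∑ i ∈ Icc 1 L, (g i - g (i-1))) = g L - g 0 := by
  induction L with
  | zero => simp
  | succ n ih =>
    rw [Finset.sum_Icc_succ_top (by omega), ih]
    simp only [Nat.add_sub_cancel]
    ring

private noncomputable def gFun (q t : ℝ) (d l : ℕ) (j : ℕ) : ℝ :=
  (∏ m ∈ Icc 1 j, bq q t m) * (∏ m ∈ Icc (d-l) (d-j), bq q t m)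


/-- Positivity of the `(2l+1)`-term expression: for real `q, t > 1`, integers
`d, l` with `1 ≤ l ≤ ⌊(d-1)/2⌋`, and indices `l < s_i < d - l` (for `1 ≤ i ≤ l`),
`Σ_{i=1}^l (∏_{m=1}^{i-1} b_m)(b_i b_{d-i} - b_{s_i} b_{d-s_i})(∏_{m=d-l}^{d-i-1} b_m)
 + ∏_{m=d-l}^{d} b_m > 0`. -/
theorem qAnalogue_positivity (q t : ℝ) (hq : 1 < q) (ht : 1 < t)
    (d l : ℕ) (hl : 1 ≤ l) (hd : 2 * l + 1 ≤ d)
    (s : ℕ → ℕ) (hs : ∀ i, 1 ≤ i → i ≤ l → l < s i ∧ s i < d - l) :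
    0 < (∑ i ∈ Finset.Icc 1 l,
        (∏ m ∈ Finset.Icc 1 (i - 1), bq q t m) *
          (bq q t i * bq q t (d - i) - bq q t (s i) * bq q t (d - s i)) *
          (∏ m ∈ Finset.Icc (d - l) (d - i - 1), bq q t m)) +
      ∏ m ∈ Finset.Icc (d - l) d, bq q t m := by
  obtain ⟨hs1, hs2⟩ := hs 1 le_rfl hl
  have hd2 : 2 * l + 2 ≤ d := by omega
  have hprod : ∀ A B : ℕ, 1 ≤ A → 0 < ∏ m ∈ Finset.Icc A B, bq q t m := by
    intro A B hA
    apply Finset.prod_pos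
    intro m hm
    rw [Finset.mem_Icc] at hm
    exact bq_pos q t hq ht m (by omega)
  rcases le_total q t with hqt | htq
  · -- case q ≤ t : every summand is nonnegative
    apply add_pos_of_nonneg_of_pos
    · apply Finset.sum_nonneg
      intro i hi
      rw [Finset.mem_Icc] at hi
      obtain ⟨h1, h2⟩ := hi
      obtain ⟨ha, hb⟩ := hs i h1 h2
      have hp := bq_pair q t hq ht hqt (i-1) (s i - i - 1) (d - s i - i - 1)
      rw [show i-1+(s i - i - 1)+2 = s i by omega,
          show i-1+(d - s i - i - 1)+2 = d - s i by omega,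
          show i-1+1 = i by omega,
          show i-1+(s i - i - 1)+(d - s i - i - 1)+3 = d - i by omega] at hp
      exact mul_nonneg (mul_nonneg (hprod 1 (i-1) le_rfl).le (by linarith))
        (hprod (d-l) (d-i-1) (by omega)).le
    · exact hprod (d-l) d (by omega)
  · -- case t ≤ q : telescoping rewrite
    have tele := sum_tele (gFun q t d l) l
    have hstep : ∀ i ∈ Finset.Icc 1 l,
        (∏ m ∈ Finset.Icc 1 (i - 1), bq q t m) *
          (bq q t i * bq q t (d - i) - bq q t (s i) * bq q t (d - s i)) *
          (∏ m ∈ Finset.Icc (d - l) (d - i - 1), bq q t m)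
        = (∏ m ∈ Finset.Icc 1 (i - 1), bq q t m) *
            (bq q t (d - i) * bq q t (d - i + 1) - bq q t (s i) * bq q t (d - s i)) *
            (∏ m ∈ Finset.Icc (d - l) (d - i - 1), bq q t m)
          + (gFun q t d l i - gFun q t d l (i - 1)) := by
      intro i hi
      rw [Finset.mem_Icc] at hi
      obtain ⟨h1, h2⟩ := hi
      have e1 : ∏ m ∈ Finset.Icc 1 i, bq q t m
          = (∏ m ∈ Finset.Icc 1 (i-1), bq q t m) * bq q t i := prod_split _ 1 i h1 h1
      have e2 : ∏ m ∈ Finset.Icc (d-l) (d-i), bq q t m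
          = (∏ m ∈ Finset.Icc (d-l) (d-i-1), bq q t m) * bq q t (d-i) :=
        prod_split _ (d-l) (d-i) (by omega) (by omega)
      have e3 : ∏ m ∈ Finset.Icc (d-l) (d-(i-1)), bq q t m
          = (∏ m ∈ Finset.Icc (d-l) (d-i), bq q t m) * bq q t (d-i+1) := by
        have h := prod_split (bq q t) (d-l) (d-i+1) (by omega) (by omega)
        rw [show d-i+1-1 = d-i by omega] at h
        rw [show d-(i-1) = d-i+1 by omega]
        exact h
      simp only [gFun]
      rw [e3, e2, e1]
      ring
    rw [Finset.sum_congr rfl hstep, Finset.sum_add_distrib, tele]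
    have hg0 : gFun q t d l 0 = ∏ m ∈ Finset.Icc (d-l) d, bq q t m := by
      simp [gFun]
    rw [hg0]
    have hgl : 0 < gFun q t d l l :=
      mul_pos (hprod 1 l le_rfl) (hprod (d-l) (d-l) (by omega))
    have hnew : 0 ≤ ∑ i ∈ Finset.Icc 1 l,
        (∏ m ∈ Finset.Icc 1 (i - 1), bq q t m) *
          (bq q t (d - i) * bq q t (d - i + 1) - bq q t (s i) * bq q t (d - s i)) *
          (∏ m ∈ Finset.Icc (d - l) (d - i - 1), bq q t m) := by
      apply Finset.sum_nonneg
      intro i hi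
      rw [Finset.mem_Icc] at hi
      obtain ⟨h1, h2⟩ := hi
      obtain ⟨ha, hb⟩ := hs i h1 h2
      have m1 : bq q t (s i) ≤ bq q t (d - i) :=
        bq_mono q t hq ht htq (d - i) (s i) (by omega) (by omega)
      have m2 : bq q t (d - s i) ≤ bq q t (d - i + 1) :=
        bq_mono q t hq ht htq (d - i + 1) (d - s i) (by omega) (by omega)
      have hc := mul_le_mul m1 m2 (bq_pos q t hq ht (d - s i) (by omega)).le
        (bq_pos q t hq ht (d - i) (by omega)).le
      exact mul_nonneg (mul_nonneg (hprod 1 (i-1) le_rfl).le (by linarith))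
        (hprod (d-l) (d-i-1) (by omega)).le
    linarith
end
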